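/- arXiv:1011.0355 — 2 statements merged into one kernel-verified Lean document; each statement's English description precedes it below -/
import Mathlib

section
/- For the heterogeneous Firework Process, let a_n = ∏_{i=0}^{n} P(R_{n−i} < (i+1)m) for n ∈ ℕ. If ∑_{n=0}^{∞} a_n < ∞, then P(V) > 0. -/
/-!
Condition on the event `A` that the first `N` vertices all reach at least `m` further; since
consecutive positions are at most `m` apart, on `A` the process cannot stop at any vertex `≤ N`,
and `P A > 0` because each `P (R i < m) < 1`. If it stops at vertex `k + 1 > N`, every earlier
vertex `i` has `R i < u (k+1) - u i ≤ (k + 1 - i) m`. For `i < N` this meets the increasing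
event `R i ≥ m`, and for a single variable an increasing and a decreasing event are negatively
correlated, so `P (A ∩ stop at k + 1) ≤ P A * a k` by independence. Choosing `N` with
`∑_{k ≥ N} a k < 1` leaves `P (A ∩ V) > 0`.
-/

open MeasureTheory ProbabilityTheory Filter Finset
open scoped ENNReal

section Correlation

variable {Ω : Type*} [MeasurableSpace Ω] {P : Measure Ω}

theorem ProbabilityTheory.iIndepFun.measure_biInter_inter_biInter_le {ι β : Type*}
    [MeasurableSpace β] {X : ι → Ω → β} (hX : iIndepFun X P) {s t : Finset ι} (hst : s ⊆ t)
    {E F : ι → Set β} (hE : ∀ i, MeasurableSet (E i)) (hF : ∀ i, MeasurableSet (F i))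
    (hEF : ∀ i ∈ s, P (X i ⁻¹' (E i ∩ F i)) ≤ P (X i ⁻¹' E i) * P (X i ⁻¹' F i)) :
    P ((⋂ i ∈ s, X i ⁻¹' E i) ∩ ⋂ i ∈ t, X i ⁻¹' F i) ≤
      P (⋂ i ∈ s, X i ⁻¹' E i) * ∏ i ∈ t, P (X i ⁻¹' F i) := by
  classical
  set B : ι → Set β := fun i => if i ∈ s then E i ∩ F i else F i
  have hB :
      (⋂ i ∈ s, X i ⁻¹' E i) ∩ ⋂ i ∈ t, X i ⁻¹' F i = ⋂ i ∈ t, X i ⁻¹' B i := by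
    ext ω
    simp only [B, Set.mem_inter_iff, Set.mem_iInter, Set.mem_preimage]
    grind
  have hBmeas : ∀ i, MeasurableSet (B i) := fun i => by
    by_cases his : i ∈ s <;> simp [B, his, (hE i).inter (hF i), hF i]
  rw [hB, hX.meas_biInter fun i _ => ⟨B i, hBmeas i, rfl⟩,
    hX.meas_biInter fun i _ => ⟨E i, hE i, rfl⟩]
  calc ∏ i ∈ t, P (X i ⁻¹' B i)
      ≤ ∏ i ∈ t, (if i ∈ s then P (X i ⁻¹' E i) else 1) * P (X i ⁻¹' F i) :=
        prod_le_prod' fun i _ => by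
          by_cases his : i ∈ s
          · simpa only [B, if_pos his] using hEF i his
          · simp only [B, if_neg his, one_mul, le_rfl]
    _ = (∏ i ∈ s, P (X i ⁻¹' E i)) * ∏ i ∈ t, P (X i ⁻¹' F i) := by
        rw [prod_mul_distrib, prod_ite_mem, inter_eq_right.mpr hst]

variable [IsProbabilityMeasure P]

theorem measure_sdiff_le_measure_compl_mul {E F : Set Ω} (hEF : E ⊆ F)
    (hE : NullMeasurableSet E P) : P (F \ E) ≤ P Eᶜ * P F := by
  rw [measure_sdiff hEF hE (measure_ne_top _ _), prob_compl_eq_one_sub₀ hE,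
    ENNReal.sub_mul fun _ _ => measure_ne_top _ _, one_mul]
  exact tsub_le_tsub_left (mul_le_of_le_one_right' prob_le_one) _

theorem measure_preimage_Ico_le_mul {α : Type*} [LinearOrder α] [TopologicalSpace α]
    [OrderClosedTopology α] [MeasurableSpace α] [OpensMeasurableSpace α]
    {X : Ω → α} (hX : Measurable X) (a b : α) :
    P (X ⁻¹' Set.Ico a b) ≤ P (X ⁻¹' Set.Ici a) * P (X ⁻¹' Set.Iio b) := by
  rcases le_or_gt a b with hab | hba
  · have hIco : X ⁻¹' Set.Ico a b = X ⁻¹' Set.Iio b \ X ⁻¹' Set.Iio a := by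
      ext; simp [and_comm]
    have hIci : X ⁻¹' Set.Ici a = (X ⁻¹' Set.Iio a)ᶜ := by
      ext; simp
    rw [hIco, hIci]
    exact measure_sdiff_le_measure_compl_mul (Set.preimage_mono (Set.Iio_subset_Iio hab))
      (hX measurableSet_Iio).nullMeasurableSet
  · simp [Set.Ico_eq_empty_of_le hba.le]

end Correlation

theorem measure_pos_of_measure_sdiff_le_mul {α : Type*} [MeasurableSpace α] {μ : Measure α}
    {A V : Set α} {t : ℝ≥0∞} (hA₀ : μ A ≠ 0) (hA : μ A ≠ ∞) (ht : t < 1)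
    (hAV : μ (A \ V) ≤ μ A * t) : 0 < μ V := by
  refine pos_iff_ne_zero.mpr fun hV => ?_
  have hlt : μ A * t < μ A := by
    simpa using ENNReal.mul_lt_mul_right hA₀ hA ht
  have hle : μ A ≤ μ A * t :=
    calc μ A ≤ μ (A ∩ V) + μ (A \ V) := measure_le_inter_add_sdiff μ A V
      _ ≤ μ A * t := by simpa [measure_mono_null Set.inter_subset_right hV] using hAV
  exact hlt.not_ge hle

theorem Nat.sub_le_mul_of_succ_sub_le {u : ℕ → ℕ} {m : ℕ}
    (hstep : ∀ n, u (n + 1) - u n ≤ m) {i n : ℕ} (hin : i ≤ n) : u n - u i ≤ (n - i) * m := by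
  induction n, hin using Nat.le_induction with
  | base => simp
  | succ n hin ih =>
    calc u (n + 1) - u i ≤ u (n + 1) - u n + (u n - u i) := tsub_le_tsub_add_tsub
      _ ≤ m + (n - i) * m := add_le_add (hstep n) ih
      _ = (n + 1 - i) * m := by rw [Nat.sub_add_comm hin, Nat.succ_mul, add_comm]

namespace Firework

variable {Ω : Type*} {u : ℕ → ℕ} {m : ℕ} {R : ℕ → Ω → ℝ}

def survival (u : ℕ → ℕ) (R : ℕ → Ω → ℝ) : Set Ω :=
  ⋂ (n : ℕ) (_ : 1 ≤ n), ⋃ i ∈ Finset.range n, {ω | ((u n - u i : ℕ) : ℝ) ≤ R i ω}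

def stopsBefore (u : ℕ → ℕ) (R : ℕ → Ω → ℝ) (n : ℕ) : Set Ω :=
  ⋂ i ∈ range n, R i ⁻¹' Set.Iio ((u n - u i : ℕ) : ℝ)

def farReaching (R : ℕ → Ω → ℝ) (m N : ℕ) : Set Ω :=
  ⋂ i ∈ range N, R i ⁻¹' Set.Ici (m : ℝ)

theorem compl_survival_subset : (survival u R)ᶜ ⊆ ⋃ k, stopsBefore u R (k + 1) := by
  intro ω hω
  simp only [survival, Set.mem_compl_iff, Set.mem_iInter, not_forall] at hω
  obtain ⟨n, hn, hω⟩ := hω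
  obtain ⟨k, rfl⟩ : ∃ k, n = k + 1 := ⟨n - 1, by omega⟩
  simp only [Set.mem_iUnion, Set.mem_ofPred_eq, not_exists, not_le] at hω
  exact Set.mem_iUnion.mpr ⟨k, Set.mem_iInter₂.mpr fun i hi => hω i hi⟩

theorem disjoint_farReaching_stopsBefore {N k : ℕ} (hk : k < N) (hstep : u (k + 1) - u k ≤ m) :
    Disjoint (farReaching R m N) (stopsBefore u R (k + 1)) := by
  refine Set.disjoint_left.mpr fun ω hfar hstop => ?_
  have hge : (m : ℝ) ≤ R k ω := Set.mem_iInter₂.mp hfar k (mem_range.mpr hk)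
  have hlt : R k ω < ((u (k + 1) - u k : ℕ) : ℝ) :=
    Set.mem_iInter₂.mp hstop k (mem_range.mpr k.lt_succ_self)
  have hstep' : ((u (k + 1) - u k : ℕ) : ℝ) ≤ m := by exact_mod_cast hstep
  linarith

variable [MeasurableSpace Ω] {P : Measure Ω} [IsProbabilityMeasure P]

/-- The paper's `a n`. -/
noncomputable def stopBound (P : Measure Ω) (R : ℕ → Ω → ℝ) (m n : ℕ) : ℝ≥0∞ :=
  ∏ i ∈ range (n + 1), P {ω | R (n - i) ω < (((i + 1) * m : ℕ) : ℝ)}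

theorem measure_farReaching_ne_zero (hmeas : ∀ i, Measurable (R i)) (hindep : iIndepFun R P)
    (h1 : ∀ n, P {ω | R n ω < (m : ℝ)} < 1) (N : ℕ) : P (farReaching R m N) ≠ 0 := by
  rw [farReaching, hindep.meas_biInter fun i _ => ⟨_, measurableSet_Ici, rfl⟩]
  refine prod_ne_zero_iff.mpr fun i _ => ?_
  have hcompl : R i ⁻¹' Set.Ici (m : ℝ) = (R i ⁻¹' Set.Iio (m : ℝ))ᶜ := by ext; simp
  rw [hcompl, prob_compl_eq_one_sub (hmeas i measurableSet_Iio)]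
  exact (tsub_pos_of_lt (h1 i)).ne'

theorem measure_farReaching_inter_stopsBefore_le (hstep : ∀ n, u (n + 1) - u n ≤ m)
    (hmeas : ∀ i, Measurable (R i)) (hindep : iIndepFun R P) {N k : ℕ} (hk : N ≤ k) :
    P (farReaching R m N ∩ stopsBefore u R (k + 1)) ≤
      P (farReaching R m N) * stopBound P R m k := by
  set c : ℕ → ℝ := fun i => (((k + 1 - i) * m : ℕ) : ℝ)
  have hsub : stopsBefore u R (k + 1) ⊆ ⋂ i ∈ range (k + 1), R i ⁻¹' Set.Iio (c i) :=
    Set.biInter_mono subset_rfl fun i hi => Set.preimage_mono <| Set.Iio_subset_Iio <|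
      Nat.cast_le.mpr (Nat.sub_le_mul_of_succ_sub_le hstep (mem_range.mp hi).le)
  have hbound : stopBound P R m k = ∏ i ∈ range (k + 1), P (R i ⁻¹' Set.Iio (c i)) := by
    rw [stopBound, ← prod_range_reflect]
    refine prod_congr rfl fun i hi => ?_
    have hik := mem_range_succ_iff.mp hi
    simp only [c, Nat.add_sub_cancel, Nat.sub_sub_self hik, Nat.sub_add_comm hik]
    rfl
  rw [hbound]
  refine (measure_mono (Set.inter_subset_inter_right _ hsub)).trans <|
    hindep.measure_biInter_inter_biInter_le (range_subset_range.mpr (by omega))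
      (fun _ => measurableSet_Ici) (fun _ => measurableSet_Iio) fun i _ => ?_
  rw [Set.Ici_inter_Iio]
  exact measure_preimage_Ico_le_mul (hmeas i) _ _

theorem measure_farReaching_sdiff_survival_le (hstep : ∀ n, u (n + 1) - u n ≤ m)
    (hmeas : ∀ i, Measurable (R i)) (hindep : iIndepFun R P) (N : ℕ) :
    P (farReaching R m N \ survival u R) ≤
      P (farReaching R m N) * ∑' k, stopBound P R m (k + N) := by
  have hcover : farReaching R m N \ survival u R ⊆
      ⋃ j, farReaching R m N ∩ stopsBefore u R (j + N + 1) := by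
    rintro ω ⟨hfar, hsurv⟩
    obtain ⟨k, hk⟩ := Set.mem_iUnion.mp (compl_survival_subset hsurv)
    rcases lt_or_ge k N with hkN | hkN
    · exact absurd hk ((disjoint_farReaching_stopsBefore hkN (hstep k)).notMem_of_mem_left hfar)
    · refine Set.mem_iUnion.mpr ⟨k - N, hfar, ?_⟩
      rwa [Nat.sub_add_cancel hkN]
  calc P (farReaching R m N \ survival u R)
      ≤ ∑' j, P (farReaching R m N ∩ stopsBefore u R (j + N + 1)) :=
        (measure_mono hcover).trans (measure_iUnion_le _)
    _ ≤ ∑' j, P (farReaching R m N) * stopBound P R m (j + N) :=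
        ENNReal.tsum_le_tsum fun j =>
          measure_farReaching_inter_stopsBefore_le hstep hmeas hindep (Nat.le_add_left N j)
    _ = P (farReaching R m N) * ∑' k, stopBound P R m (k + N) := ENNReal.tsum_mul_left

end Firework

theorem firework_heterogeneous_survival_of_summable_general
    {Ω : Type*} [MeasurableSpace Ω] (P : Measure Ω) [IsProbabilityMeasure P]
    (m : ℕ)
    (u : ℕ → ℕ)
    (hustep : ∀ n, u (n + 1) - u n ≤ m)
    (R : ℕ → Ω → ℝ)
    (hmeas : ∀ i, Measurable (R i))
    (hindep : iIndepFun R P)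
    (h1 : ∀ n, P {ω | R n ω < (m : ℝ)} < 1)
    (V : Set Ω)
    (hV : V = ⋂ (n : ℕ) (_ : 1 ≤ n), ⋃ i ∈ Finset.range n,
      {ω | ((u n - u i : ℕ) : ℝ) ≤ R i ω})
    (a : ℕ → ℝ≥0∞)
    (ha : ∀ n, a n = ∏ i ∈ Finset.range (n + 1),
      P {ω | R (n - i) ω < (((i + 1) * m : ℕ) : ℝ)})
    (hsum : (∑' n : ℕ, a n) ≠ ⊤) :
    0 < P V := by
  obtain rfl : a = Firework.stopBound P R m := funext ha
  obtain ⟨N, hN⟩ : ∃ N, ∑' k, Firework.stopBound P R m (k + N) < 1 :=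
    ((ENNReal.tendsto_sum_nat_add _ hsum).eventually (gt_mem_nhds zero_lt_one)).exists
  rw [show V = Firework.survival u R from hV]
  exact measure_pos_of_measure_sdiff_le_mul
    (Firework.measure_farReaching_ne_zero hmeas hindep h1 N) (measure_ne_top _ _) hN
    (Firework.measure_farReaching_sdiff_survival_le hustep hmeas hindep N)

/-- **Heterogeneous Firework Process.** With `a n = ∏_{i=0}^{n} P(R_{n-i} < (i+1)m)`,
if `∑_{n=0}^∞ a n < ∞` then `P(V) > 0`. -/
theorem firework_heterogeneous_survival_of_summable
    {Ω : Type*} [MeasurableSpace Ω] (P : Measure Ω) [IsProbabilityMeasure P]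
    (m : ℕ) (hm : 1 ≤ m)
    (u : ℕ → ℕ) (hu0 : u 0 = 0) (humono : StrictMono u)
    (hustep : ∀ n, u (n + 1) - u n ≤ m)
    (R : ℕ → Ω → ℝ)
    (hmeas : ∀ i, Measurable (R i))
    (hnonneg : ∀ i ω, 0 ≤ R i ω)
    (hindep : iIndepFun R P)
    (h0 : ∀ n, 0 < P {ω | R n ω < (m : ℝ)})
    (h1 : ∀ n, P {ω | R n ω < (m : ℝ)} < 1)
    (V : Set Ω)
    (hV : V = ⋂ (n : ℕ) (_ : 1 ≤ n), ⋃ i ∈ Finset.range n,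
      {ω | ((u n - u i : ℕ) : ℝ) ≤ R i ω})
    (a : ℕ → ℝ≥0∞)
    (ha : ∀ n, a n = ∏ i ∈ Finset.range (n + 1),
      P {ω | R (n - i) ω < (((i + 1) * m : ℕ) : ℝ)})
    (hsum : (∑' n : ℕ, a n) ≠ ⊤) :
    0 < P V :=
  firework_heterogeneous_survival_of_summable_general P m u hustep R hmeas hindep h1 V hV a ha hsum
end

section
/- For the homogeneous Reverse Firework Process, if R has finite expectation (equivalently, ∑_{n=1}^{∞} P(R ≥ n) < ∞), then P(S) = 0. -/
/-!
If `E R < ∞`, the first Borel–Cantelli lemma gives `R_k ≤ k / 2` for all large `k` almost surely,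
so for large `n` any vertex `n + j` reaching back to `n` has `j ≤ n`. For `n = 2 ^ m` the events
"no vertex of `(n, 2n]` reaches back to `n`" depend on disjoint blocks of the `R_k`, hence are
independent, and their probabilities `∏_{j ≤ n} P(R < j)` stay above `∏_{j ≥ 1} P(R < j) > 0`,
because `∑ P(R ≥ j) < ∞` and `P(R ≥ j) ≤ P(R ≥ 1) < 1`. By the second Borel–Cantelli lemma
infinitely many of these events occur, and any late enough one stops the process.
-/

open MeasureTheory ProbabilityTheory Filter
open scoped ENNReal Function

namespace ENNReal

theorem one_sub_sum_le_prod_one_sub {ι : Type*} (s : Finset ι) (x : ι → ℝ≥0∞) :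
    1 - ∑ i ∈ s, x i ≤ ∏ i ∈ s, (1 - x i) := by
  classical
  induction s using Finset.induction_on with
  | empty => simp
  | insert a s ha ih =>
    set p := ∏ i ∈ s, (1 - x i)
    have hp : p ≤ 1 := Finset.prod_le_one' fun _ _ => tsub_le_self
    rw [Finset.sum_insert ha, Finset.prod_insert ha, add_comm, ← tsub_tsub]
    calc 1 - ∑ i ∈ s, x i - x a ≤ p - x a := tsub_le_tsub_right ih _
      _ ≤ p - x a * p := tsub_le_tsub_left (mul_le_of_le_one_right' hp) _
      _ = (1 - x a) * p := by
        rw [ENNReal.sub_mul fun _ _ => ne_top_of_le_ne_top one_ne_top hp, one_mul]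

theorem exists_ne_zero_le_prod_range_one_sub {x : ℕ → ℝ≥0∞} (hx : ∀ n, x n < 1)
    (hsum : ∑' n, x n ≠ ∞) : ∃ c ≠ 0, ∀ N, c ≤ ∏ n ∈ Finset.range N, (1 - x n) := by
  obtain ⟨N₀, hN₀⟩ := ((tendsto_sum_nat_add x hsum).eventually_lt_const one_pos).exists
  refine ⟨(∏ n ∈ Finset.range N₀, (1 - x n)) * (1 - ∑' k, x (k + N₀)), ?_, fun N => ?_⟩
  · exact mul_ne_zero (Finset.prod_ne_zero_iff.2 fun n _ => (tsub_pos_of_lt (hx n)).ne')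
      (tsub_pos_of_lt hN₀).ne'
  calc (∏ n ∈ Finset.range N₀, (1 - x n)) * (1 - ∑' k, x (k + N₀))
      ≤ (∏ n ∈ Finset.range N₀, (1 - x n)) * ∏ k ∈ Finset.range N, (1 - x (N₀ + k)) := by
        gcongr
        refine le_trans (tsub_le_tsub_left ?_ 1) (one_sub_sum_le_prod_one_sub _ _)
        simpa only [add_comm] using ENNReal.sum_le_tsum (Finset.range N) (f := fun k => x (k + N₀))
    _ = ∏ n ∈ Finset.range (N₀ + N), (1 - x n) := (Finset.prod_range_add _ _ _).symm
    _ ≤ ∏ n ∈ Finset.range N, (1 - x n) :=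
        Finset.prod_le_prod_of_subset_of_le_one' (by simp) fun _ _ _ => tsub_le_self

theorem tsum_comp_div_two (f : ℕ → ℝ≥0∞) : ∑' k, f (k / 2) = 2 * ∑' k, f k := by
  rw [← tsum_even_add_odd ENNReal.summable ENNReal.summable, two_mul]
  congr 1 <;> exact tsum_congr fun k => by congr 1; omega

end ENNReal

theorem MeasureTheory.prob_lt_eq_one_sub_prob_le {Ω : Type*} [MeasurableSpace Ω]
    {P : Measure Ω} [IsProbabilityMeasure P] {X : Ω → ℕ} (hX : AEMeasurable X P) (a : ℕ) :
    P {ω | X ω < a} = 1 - P {ω | a ≤ X ω} := by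
  have : {ω | X ω < a} = (X ⁻¹' {x | a ≤ x})ᶜ := by ext; simp
  rw [this, prob_compl_eq_one_sub₀ (hX.nullMeasurableSet_preimage .of_discrete)]
  rfl

theorem ProbabilityTheory.iIndep.iIndepSet_biInter {Ω ι κ : Type*} {mΩ : MeasurableSpace Ω}
    {μ : Measure Ω} {m : ι → MeasurableSpace Ω} (hm : iIndep m μ) (h_le : ∀ i, m i ≤ mΩ)
    {I : κ → Finset ι} (hI : Pairwise (Disjoint on I)) {E : κ → ι → Set Ω}
    (hE : ∀ k, ∀ i ∈ I k, MeasurableSet[m i] (E k i)) :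
    iIndepSet (fun k => ⋂ i ∈ I k, E k i) μ := by
  rw [iIndepSet_iff_meas_biInter fun k => Finset.measurableSet_biInter _ fun i hi =>
    h_le i _ (hE k i hi)]
  intro s
  have hinj : Function.Injective fun p : (k : κ) × I k => (p.2 : ι) := by
    rintro ⟨k, i, hi⟩ ⟨l, j, hj⟩ (rfl : i = j)
    obtain rfl : k = l := by
      by_contra hkl
      exact Finset.disjoint_left.1 (hI hkl) hi hj
    rfl
  have hsigma := (hm.precomp hinj).meas_biInter (S := s.sigma fun k => (I k).attach)
    (s := fun p => E p.1 p.2) fun p _ => hE p.1 p.2 p.2.2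
  have hinter :
      (⋂ p ∈ s.sigma fun k => (I k).attach, E p.1 p.2) = ⋂ k ∈ s, ⋂ i ∈ I k, E k i := by
    ext ω
    simp only [Set.mem_iInter, Finset.mem_sigma, Finset.mem_attach, and_true]
    exact ⟨fun h k hk i hi => h ⟨k, i, hi⟩ hk, fun h p hp => h p.1 hp p.2 p.2.2⟩
  rw [← hinter, hsigma, Finset.prod_sigma]
  refine Finset.prod_congr rfl fun k _ => ?_
  rw [hm.meas_biInter (hE k), ← Finset.prod_attach (I k)]

namespace ReverseFirework

variable {Ω : Type*}

def blocked (R : ℕ → Ω → ℕ) (n : ℕ) : Set Ω :=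
  ⋂ k ∈ Finset.Ioc n (2 * n), {ω | R k ω < k - n}

def farReaching (R : ℕ → Ω → ℕ) (k : ℕ) : Set Ω :=
  {ω | k < 2 * R k ω}

theorem survival_subset (R : ℕ → Ω → ℕ) :
    ⋂ n, ⋃ (j : ℕ) (_ : 1 ≤ j), {ω | j ≤ R (n + j) ω} ⊆
      limsup (farReaching R) atTop ∪ (limsup (fun m => blocked R (2 ^ m)) atTop)ᶜ := by
  intro ω hω
  by_contra h
  rw [Set.mem_union, Set.mem_compl_iff, not_or, not_not, mem_limsup_iff_frequently_mem,
    mem_limsup_iff_frequently_mem, not_frequently] at h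
  obtain ⟨K, hK⟩ := eventually_atTop.1 h.1
  obtain ⟨m, hKm, hblocked⟩ := frequently_atTop.1 h.2 K
  obtain ⟨j, hj, hjR⟩ : ∃ j, 1 ≤ j ∧ j ≤ R (2 ^ m + j) ω := by
    simpa using Set.mem_iInter.1 hω (2 ^ m)
  rcases le_or_gt j (2 ^ m) with hle | hgt
  · have : R (2 ^ m + j) ω < 2 ^ m + j - 2 ^ m :=
      Set.mem_iInter₂.1 hblocked (2 ^ m + j) (Finset.mem_Ioc.2 ⟨by omega, by omega⟩)
    omega
  · have hm : m < 2 ^ m := Nat.lt_two_pow_self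
    exact hK (2 ^ m + j) (by omega) (show 2 ^ m + j < 2 * R (2 ^ m + j) ω by omega)

variable [MeasurableSpace Ω] {R : ℕ → Ω → ℕ} {P : Measure Ω}

theorem measurableSet_blocked (hR : ∀ k, Measurable (R k)) (n : ℕ) :
    MeasurableSet (blocked R n) :=
  Finset.measurableSet_biInter _ fun k _ => hR k (t := {x | x < k - n}) .of_discrete

theorem iIndepSet_blocked_two_pow (hindep : iIndepFun R P) (hR : ∀ k, Measurable (R k)) :
    iIndepSet (fun m => blocked R (2 ^ m)) P := by
  refine hindep.iIndep.iIndepSet_biInter (fun k => (hR k).comap_le)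
    ((pairwise_disjoint_on _).2 fun m m' hmm' => Finset.disjoint_left.2 fun k hk hk' => ?_)
    fun m k _ => ⟨{x | x < k - 2 ^ m}, .of_discrete, rfl⟩
  have : 2 * 2 ^ m ≤ 2 ^ m' := by
    rw [← pow_succ']
    exact Nat.pow_le_pow_right two_pos hmm'
  rw [Finset.mem_Ioc] at hk hk'
  omega

variable {R₀ : Ω → ℕ}

theorem measure_farReaching (hid : ∀ i, IdentDistrib (R i) R₀ P P) (k : ℕ) :
    P (farReaching R k) = P {ω | k / 2 + 1 ≤ R₀ ω} := by
  have : farReaching R k = R k ⁻¹' {x | k / 2 + 1 ≤ x} := by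
    ext ω
    change k < 2 * R k ω ↔ k / 2 + 1 ≤ R k ω
    omega
  rw [this, (hid k).measure_mem_eq .of_discrete]
  rfl

theorem measure_blocked [IsProbabilityMeasure P] (hindep : iIndepFun R P)
    (hid : ∀ i, IdentDistrib (R i) R₀ P P) (n : ℕ) :
    P (blocked R n) = ∏ j ∈ Finset.range n, (1 - P {ω | j + 1 ≤ R₀ ω}) := by
  rw [blocked, hindep.meas_biInter (s := fun k => {ω | R k ω < k - n})
      fun k _ => ⟨{x | x < k - n}, .of_discrete, rfl⟩,
    ← Finset.Ico_add_one_add_one_eq_Ioc, Finset.prod_Ico_eq_prod_range]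
  refine Finset.prod_congr (by congr 1; omega) fun j _ => ?_
  rw [show n + 1 + j - n = j + 1 by omega,
    ← prob_lt_eq_one_sub_prob_le (hid 0).aemeasurable_snd]
  exact (hid _).measure_mem_eq (s := {x | x < j + 1}) .of_discrete

end ReverseFirework

open ReverseFirework

theorem reverse_firework_homogeneous_death_general
    {Ω : Type*} [MeasurableSpace Ω] (P : Measure Ω) [IsProbabilityMeasure P]
    (R : ℕ → Ω → ℕ) (R₀ : Ω → ℕ)
    (hmeas : ∀ i, Measurable (R i))
    (hindep : iIndepFun R P)
    (hid : ∀ i, IdentDistrib (R i) R₀ P P)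
    (h0 : 0 < P {ω | R₀ ω < 1})
    (S : Set Ω)
    (hS : S = ⋂ (n : ℕ), ⋃ (j : ℕ) (_ : 1 ≤ j), {ω | j ≤ R (n + j) ω})
    (hE : (∑' n : ℕ, P {ω | n + 1 ≤ R₀ ω}) ≠ ⊤) :
    P S = 0 := by
  have hlt_one : ∀ n, P {ω | n + 1 ≤ R₀ ω} < 1 := by
    have h0' := h0.trans_eq (prob_lt_eq_one_sub_prob_le (hid 0).aemeasurable_snd 1)
    exact fun n => (measure_mono fun ω (h : n + 1 ≤ R₀ ω) => show 1 ≤ R₀ ω by omega).trans_lt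
      (tsub_pos_iff_lt.1 h0')
  obtain ⟨c, hc, hc_le⟩ := ENNReal.exists_ne_zero_le_prod_range_one_sub hlt_one hE
  have hfar : P (limsup (farReaching R) atTop) = 0 := by
    refine measure_limsup_atTop_eq_zero ?_
    rw [tsum_congr (measure_farReaching hid),
      ENNReal.tsum_comp_div_two fun n => P {ω | n + 1 ≤ R₀ ω}]
    exact ENNReal.mul_ne_top ENNReal.ofNat_ne_top hE
  have hblocked : P (limsup (fun m => blocked R (2 ^ m)) atTop) = 1 := by
    refine measure_limsup_eq_one (fun m => measurableSet_blocked hmeas _)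
      (iIndepSet_blocked_two_pow hindep hmeas)
      (eq_top_mono ?_ (ENNReal.tsum_const_eq_top_of_ne_zero (α := ℕ) hc))
    exact ENNReal.tsum_le_tsum fun m => (hc_le _).trans_eq (measure_blocked hindep hid _).symm
  refine measure_mono_null (hS ▸ survival_subset R) (measure_union_null hfar ?_)
  exact (prob_compl_eq_zero_iff
    (MeasurableSet.measurableSet_limsup fun m => measurableSet_blocked hmeas _)).2 hblocked

/-- **Homogeneous Reverse Firework Process.** If `R` has finite expectation,
i.e. `∑_{n=1}^∞ P(R ≥ n) < ∞`, then `P(S) = 0`. -/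
theorem reverse_firework_homogeneous_death
    {Ω : Type*} [MeasurableSpace Ω] (P : Measure Ω) [IsProbabilityMeasure P]
    (R : ℕ → Ω → ℕ) (R₀ : Ω → ℕ)
    (hmeas : ∀ i, Measurable (R i)) (hmeas₀ : Measurable R₀)
    (hindep : iIndepFun R P)
    (hid : ∀ i, IdentDistrib (R i) R₀ P P)
    (h0 : 0 < P {ω | R₀ ω < 1}) (h1 : P {ω | R₀ ω < 1} < 1)
    (S : Set Ω)
    (hS : S = ⋂ (n : ℕ), ⋃ (j : ℕ) (_ : 1 ≤ j), {ω | j ≤ R (n + j) ω})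
    (hE : (∑' n : ℕ, P {ω | n + 1 ≤ R₀ ω}) ≠ ⊤) :
    P S = 0 :=
  reverse_firework_homogeneous_death_general P R R₀ hmeas hindep hid h0 S hS hE
end
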